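/- arXiv:0807.3461 — 2 statements merged into one kernel-verified Lean document; each statement's English description precedes it below -/
import Mathlib

section
/- For every prime number p, the set ℕ \ {pk : k ∈ ℕ} is an essentiality of the additive basis ℕ; consequently, ℕ has infinitely many essentialities. -/
open scoped BigOperators

/-- `A` represents every sufficiently large integer as a sum of `h` of its elements
(repetitions allowed). -/
def RepresentsWith (A : Set ℤ) (h : ℕ) : Prop :=
  ∃ N : ℤ, ∀ n : ℤ, N ≤ n → ∃ f : Fin h → ℤ, (∀ i, f i ∈ A) ∧ (∑ i, f i) = n

/-- `A ⊆ ℤ` is an additive basis: it has finite intersection with the negative integers and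
there is an `h` such that every sufficiently large integer is a sum of `h` elements of `A`. -/
def IsAdditiveBasis (A : Set ℤ) : Prop :=
  (A ∩ {x : ℤ | x < 0}).Finite ∧ ∃ h : ℕ, RepresentsWith A h

/-- `P` is an essentiality of `A`: `P ⊆ A`, `A \ P` is not a basis, and `P` is minimal
for inclusion with this property. -/
def IsEssentiality (A P : Set ℤ) : Prop :=
  P ⊆ A ∧ ¬ IsAdditiveBasis (A \ P) ∧ ∀ Q : Set ℤ, Q ⊂ P → IsAdditiveBasis (A \ Q)

/-- `P` is an essential subset of `A`: a finite essentiality. -/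
def IsEssentialSubset (A P : Set ℤ) : Prop :=
  IsEssentiality A P ∧ P.Finite


/-!
Removing `ℕ \ pℕ` from `ℕ` leaves `pℕ`, whose sums are all divisible by `p`, so it is not a
basis. Removing a proper subset `Q` keeps some `x` with `p ∤ x`, and `pℕ ∪ {x}` is already a basis
of order `p`: since `x` is invertible mod `p`, every `n ≥ p x` is `j x + p m` with `0 ≤ j < p` and
`m ≥ 0`. Distinct primes give distinct essentialities.
-/

open Pointwise

theorem Set.mem_nsmul_iff_exists_fin_sum {α : Type*} [AddCommMonoid α] {s : Set α} {n : ℕ}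
    {a : α} : a ∈ n • s ↔ ∃ f : Fin n → α, (∀ i, f i ∈ s) ∧ ∑ i, f i = a := by
  rw [Set.mem_nsmul]
  constructor
  · rintro ⟨f, rfl⟩
    exact ⟨fun i => f i, fun i => (f i).2, List.sum_ofFn.symm⟩
  · rintro ⟨f, hf, rfl⟩
    exact ⟨fun i => ⟨f i, hf i⟩, List.sum_ofFn⟩

theorem representsWith_iff_mem_nsmul {A : Set ℤ} {h : ℕ} :
    RepresentsWith A h ↔ ∃ N : ℤ, ∀ n : ℤ, N ≤ n → n ∈ h • A := by
  simp only [RepresentsWith, Set.mem_nsmul_iff_exists_fin_sum]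

theorem RepresentsWith.mono {A B : Set ℤ} {h : ℕ} (hAB : A ⊆ B) (hA : RepresentsWith A h) :
    RepresentsWith B h :=
  let ⟨N, hN⟩ := hA
  ⟨N, fun n hn => (hN n hn).imp fun _ hf => ⟨fun i => hAB (hf.1 i), hf.2⟩⟩

theorem not_representsWith_of_forall_dvd {A : Set ℤ} {d : ℤ} (hd : ¬IsUnit d)
    (hA : ∀ a ∈ A, d ∣ a) (h : ℕ) : ¬RepresentsWith A h := by
  rintro ⟨N, hN⟩
  have hdvd : ∀ n, N ≤ n → d ∣ n := fun n hn => by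
    obtain ⟨f, hf, rfl⟩ := hN n hn
    exact Finset.dvd_sum fun i _ => hA _ (hf i)
  have hone : d ∣ 1 := by
    simpa using dvd_sub (hdvd (N + 1) (by omega)) (hdvd N le_rfl)
  exact hd (isUnit_of_dvd_one hone)

theorem isAdditiveBasis_of_subset_nonneg {A : Set ℤ} {h : ℕ} (hA : A ⊆ {x | 0 ≤ x})
    (hrep : RepresentsWith A h) : IsAdditiveBasis A := by
  refine ⟨Set.finite_empty.subset fun x ⟨hxA, hneg⟩ => ?_, h, hrep⟩
  exact absurd (show (0 : ℤ) ≤ x from hA hxA) (not_le.mpr hneg)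

def natMultiples (p : ℕ) : Set ℤ := {x | ∃ k : ℕ, x = p * k}

theorem mem_natMultiples_iff {p : ℕ} {y : ℤ} : y ∈ natMultiples p ↔ 0 ≤ y ∧ (p : ℤ) ∣ y := by
  constructor
  · rintro ⟨k, rfl⟩
    exact ⟨by positivity, dvd_mul_right _ _⟩
  · rintro ⟨hy, c, rfl⟩
    rcases (Int.natCast_nonneg p).eq_or_lt with hp | hp
    · exact ⟨0, by simp [← hp]⟩
    · exact ⟨c.toNat, by rw [Int.toNat_of_nonneg (nonneg_of_mul_nonneg_right hy hp)]⟩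

theorem exists_lt_dvd_sub_mul_of_isCoprime {p : ℕ} (hp : 0 < p) {x : ℤ}
    (hcop : IsCoprime (p : ℤ) x) (n : ℤ) : ∃ j : ℕ, j < p ∧ (p : ℤ) ∣ n - j * x := by
  obtain ⟨u, v, huv⟩ := hcop
  have hj : 0 ≤ n * v % p := Int.emod_nonneg _ (by omega)
  have hlt : n * v % p < p := Int.emod_lt_of_pos _ (by omega)
  refine ⟨(n * v % p).toNat, by omega, ?_⟩
  rw [Int.toNat_of_nonneg hj]
  have hsplit : n - n * v % p * x = p * (n * u) + (n * v - n * v % p) * x := by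
    linear_combination (-n) * huv
  rw [hsplit]
  exact dvd_add (dvd_mul_right _ _) (dvd_mul_of_dvd_left Int.dvd_self_sub_emod x)

-- `n = j x + p m` with `j < p`: `j` copies of `x`, one copy of `p m`, and `p - 1 - j` zeros.
theorem representsWith_insert_natMultiples {p : ℕ} (hp : 0 < p) {x : ℤ} (hx : 0 ≤ x)
    (hcop : IsCoprime (p : ℤ) x) : RepresentsWith (insert x (natMultiples p)) p := by
  refine representsWith_iff_mem_nsmul.mpr ⟨p * x, fun n hn => ?_⟩
  obtain ⟨j, hjp, m, hm⟩ := exists_lt_dvd_sub_mul_of_isCoprime hp hcop n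
  have hjx : (j : ℤ) * x ≤ p * x := mul_le_mul_of_nonneg_right (by exact_mod_cast hjp.le) hx
  have hpm : (p : ℤ) * m ∈ natMultiples p :=
    mem_natMultiples_iff.mpr ⟨by linarith, dvd_mul_right _ _⟩
  have hzero : (0 : ℤ) ∈ natMultiples p := ⟨0, by simp⟩
  have hn : n = j • x + ((p : ℤ) * m + 0) := by rw [nsmul_eq_mul]; linarith
  suffices n ∈ (j + (1 + (p - 1 - j))) • insert x (natMultiples p) by
    rwa [show j + (1 + (p - 1 - j)) = p by omega] at this
  rw [add_nsmul, add_nsmul, one_nsmul, hn]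
  exact Set.add_mem_add (Set.nsmul_mem_nsmul (Set.mem_insert _ _))
    (Set.add_mem_add (Set.mem_insert_of_mem _ hpm)
      (Set.zero_mem_nsmul (Set.mem_insert_of_mem _ hzero)))

theorem isEssentiality_nonneg_sdiff_natMultiples {p : ℕ} (hp : p.Prime) :
    IsEssentiality {x : ℤ | 0 ≤ x} ({x : ℤ | 0 ≤ x} \ natMultiples p) := by
  have hM : natMultiples p ⊆ {x : ℤ | 0 ≤ x} := fun y hy => (mem_natMultiples_iff.mp hy).1
  refine ⟨Set.sdiff_subset, fun hbasis => ?_, fun Q hQ => ?_⟩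
  · obtain ⟨-, h, hrep⟩ := hbasis
    rw [Set.sdiff_sdiff_right_self, Set.inter_eq_right.mpr hM] at hrep
    exact not_representsWith_of_forall_dvd (Nat.prime_iff_prime_int.mp hp).not_isUnit
      (fun a ha => (mem_natMultiples_iff.mp ha).2) h hrep
  · obtain ⟨x, ⟨hx0, hxM⟩, hxQ⟩ := Set.exists_of_ssubset hQ
    have hxp : ¬(p : ℤ) ∣ x := fun hdvd => hxM (mem_natMultiples_iff.mpr ⟨hx0, hdvd⟩)
    have hcop : IsCoprime (p : ℤ) x :=
      (Nat.prime_iff_prime_int.mp hp).coprime_iff_not_dvd.mpr hxp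
    have hsub : insert x (natMultiples p) ⊆ {x : ℤ | 0 ≤ x} \ Q := by
      rintro y (rfl | hy)
      · exact ⟨hx0, hxQ⟩
      · exact ⟨hM hy, fun hyQ => (hQ.1 hyQ).2 hy⟩
    exact isAdditiveBasis_of_subset_nonneg Set.sdiff_subset
      ((representsWith_insert_natMultiples hp.pos hx0 hcop).mono hsub)

theorem dvd_of_nonneg_sdiff_natMultiples_subset {p q : ℕ}
    (h : {x : ℤ | 0 ≤ x} \ natMultiples p ⊆ {x : ℤ | 0 ≤ x} \ natMultiples q) : p ∣ q := by
  by_contra hpq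
  have hq : (q : ℤ) ∈ {x : ℤ | 0 ≤ x} \ natMultiples p :=
    ⟨Int.natCast_nonneg q, fun hq =>
      hpq (Int.natCast_dvd_natCast.mp (mem_natMultiples_iff.mp hq).2)⟩
  exact (h hq).2 ⟨1, (mul_one _).symm⟩

theorem nonneg_sdiff_natMultiples_injective :
    Function.Injective fun p : ℕ => {x : ℤ | 0 ≤ x} \ natMultiples p := fun _ _ h =>
  Nat.dvd_antisymm (dvd_of_nonneg_sdiff_natMultiples_subset h.le)
    (dvd_of_nonneg_sdiff_natMultiples_subset h.ge)

theorem nat_has_infinitely_many_essentialities :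
    (∀ p : ℕ, p.Prime →
      IsEssentiality {x : ℤ | 0 ≤ x}
        ({x : ℤ | 0 ≤ x} \ {x : ℤ | ∃ k : ℕ, x = (p : ℤ) * k})) ∧
    {P : Set ℤ | IsEssentiality {x : ℤ | 0 ≤ x} P}.Infinite :=
  ⟨fun _ hp => isEssentiality_nonneg_sdiff_natMultiples hp,
    (Nat.infinite_setOfPred_prime.image nonneg_sdiff_natMultiples_injective.injOn).mono
      (Set.image_subset_iff.mpr fun _ hp => isEssentiality_nonneg_sdiff_natMultiples hp)⟩
end

section
/- Let A be an additive basis, let P₁ and P₂ be essentialities of A with P₁ ∪ P₂ ≠ A, and suppose there exists an integer d ≥ 2 dividing both d(P₁) and d(P₂). Then P₁ = P₂. -/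
open scoped BigOperators

/-- The gcd of a set of integers, as a natural number (the nonnegative generator of the
ideal generated by the set). -/
noncomputable def setGcd (S : Set ℤ) : ℕ :=
  (Submodule.IsPrincipal.generator (Ideal.span S)).natAbs

/-- `d(P) := gcd {x - y : x, y ∈ A \ P}`. -/
noncomputable def dP (A P : Set ℤ) : ℕ :=
  setGcd {z : ℤ | ∃ x ∈ A \ P, ∃ y ∈ A \ P, z = x - y}

/-!
If `P₁ ≠ P₂`, minimality forbids `P₁ ⊆ P₂`, so `P₁ ∩ P₂ ⊊ P₁` and `A \ (P₁ ∩ P₂)` is a basis.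
But `A \ (P₁ ∩ P₂) = (A \ P₁) ∪ (A \ P₂)`, and both pieces contain a common point `a` of
`A \ (P₁ ∪ P₂)`, so the whole set lies in the residue class of `a` modulo `d ≥ 2`.
Then all `h`-fold sums lie in a single class modulo `d`, which cannot contain two consecutive
integers.
-/

lemma setGcd_dvd_of_mem {S : Set ℤ} {z : ℤ} (hz : z ∈ S) : (setGcd S : ℤ) ∣ z := by
  rw [setGcd, Int.natCast_natAbs, abs_dvd]
  exact (Submodule.IsPrincipal.mem_iff_generator_dvd _).1 (Ideal.subset_span hz)

lemma dP_dvd_sub {A P : Set ℤ} {x y : ℤ} (hx : x ∈ A \ P) (hy : y ∈ A \ P) :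
    (dP A P : ℤ) ∣ x - y :=
  setGcd_dvd_of_mem ⟨x, hx, y, hy, rfl⟩

lemma not_representsWith_of_forall_dvd_sub {B : Set ℤ} {a d : ℤ} (hd : 2 ≤ d)
    (hB : ∀ x ∈ B, d ∣ x - a) (h : ℕ) : ¬ RepresentsWith B h := by
  rintro ⟨N, hN⟩
  have hsum : ∀ n, N ≤ n → d ∣ n - h * a := by
    intro n hn
    obtain ⟨f, hfB, rfl⟩ := hN n hn
    have hshift : ∑ i, f i - h * a = ∑ i, (f i - a) := by simp [Finset.sum_sub_distrib]
    rw [hshift]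
    exact Finset.dvd_sum fun i _ => hB _ (hfB i)
  have hone : d ∣ 1 := by simpa using dvd_sub (hsum (N + 1) (by omega)) (hsum N le_rfl)
  have := Int.le_of_dvd one_pos hone
  omega

lemma not_isAdditiveBasis_of_forall_dvd_sub {B : Set ℤ} {a d : ℤ} (hd : 2 ≤ d)
    (hB : ∀ x ∈ B, d ∣ x - a) : ¬ IsAdditiveBasis B :=
  fun ⟨_, h, hrep⟩ => not_representsWith_of_forall_dvd_sub hd hB h hrep

namespace IsEssentiality

variable {A P₁ P₂ : Set ℤ}

lemma eq_of_subset (h₁ : IsEssentiality A P₁) (h₂ : IsEssentiality A P₂) (h : P₁ ⊆ P₂) :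
    P₁ = P₂ :=
  by_contra fun hne => h₁.2.1 (h₂.2.2 P₁ (h.ssubset_of_ne hne))

lemma isAdditiveBasis_diff_inter (h₁ : IsEssentiality A P₁) (h₂ : IsEssentiality A P₂)
    (hne : P₁ ≠ P₂) : IsAdditiveBasis (A \ (P₁ ∩ P₂)) :=
  h₁.2.2 _ (Set.inter_subset_left.ssubset_of_ne fun h =>
    hne (h₁.eq_of_subset h₂ (Set.inter_eq_left.1 h)))

end IsEssentiality

theorem eq_of_common_divisor_of_dP_general (A P₁ P₂ : Set ℤ)
    (h₁ : IsEssentiality A P₁) (h₂ : IsEssentiality A P₂) (hcover : P₁ ∪ P₂ ≠ A)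
    (hdvd : ∃ d : ℤ, 2 ≤ d ∧ d ∣ (dP A P₁ : ℤ) ∧ d ∣ (dP A P₂ : ℤ)) :
    P₁ = P₂ := by
  obtain ⟨d, hd, hdP₁, hdP₂⟩ := hdvd
  obtain ⟨a, haA, haP⟩ := Set.exists_of_ssubset
    ((Set.union_subset h₁.1 h₂.1).ssubset_of_ne hcover)
  rw [Set.mem_union, not_or] at haP
  by_contra hne
  refine not_isAdditiveBasis_of_forall_dvd_sub hd (a := a) (fun x hx => ?_)
    (h₁.isAdditiveBasis_diff_inter h₂ hne)
  by_cases hx₁ : x ∈ P₁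
  · exact hdP₂.trans (dP_dvd_sub ⟨hx.1, fun hx₂ => hx.2 ⟨hx₁, hx₂⟩⟩ ⟨haA, haP.2⟩)
  · exact hdP₁.trans (dP_dvd_sub ⟨hx.1, hx₁⟩ ⟨haA, haP.1⟩)

theorem eq_of_common_divisor_of_dP (A P₁ P₂ : Set ℤ) (hA : IsAdditiveBasis A)
    (h₁ : IsEssentiality A P₁) (h₂ : IsEssentiality A P₂) (hcover : P₁ ∪ P₂ ≠ A)
    (hdvd : ∃ d : ℤ, 2 ≤ d ∧ d ∣ (dP A P₁ : ℤ) ∧ d ∣ (dP A P₂ : ℤ)) :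
    P₁ = P₂ :=
  eq_of_common_divisor_of_dP_general A P₁ P₂ h₁ h₂ hcover hdvd
end
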